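/- If h = s ⋆_d c is the canonical discrete convolution of two sequences s, c ∈ l¹(ℤ²), then (L_M h)(ξ) = e^{-iπ ξᵀDB⁻¹ξ} (L_M s)(ξ) (L_M c)(ξ) for all ξ ∈ ℝ². -/

import Mathlib

/-!
Write `ŝ(k) = λ_M(k) s(k) e^{-2iπ kᵀB⁻¹ξ}` for the chirp-twisted sequence. Up to the factor
`e^{iπ ξᵀDB⁻¹ξ} / √det(iB)`, `(L_M s)(ξ)` is the sum of `ŝ`. The chirp `λ_M(l)` in the twist of
`s ⋆_d c` cancels the `λ̄_M(l)` of the convolution, and `e^{-2iπ kᵀB⁻¹ξ}` is a character of `ℤ²`,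
so the twist of `s ⋆_d c` is `1/√det(iB)` times the ordinary convolution of `ŝ` and `ĉ`. Summing a
convolution of `ℓ¹` sequences gives the product of their sums.
-/

open MeasureTheory Matrix Complex

noncomputable section

abbrev V2 : Type := Fin 2 → ℝ
abbrev Z2 : Type := Fin 2 → ℤ
abbrev M2 : Type := Matrix (Fin 2) (Fin 2) ℝ

/-- cast an integer vector to a real vector -/
def zc (k : Z2) : V2 := fun i => (k i : ℝ)

/-- `ePi r = e^{iπ r}` -/
def ePi (r : ℝ) : ℂ := Complex.exp (Real.pi * Complex.I * r)

/-- quadratic/bilinear form `xᵀ P y` -/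
def Q (P : M2) (x y : V2) : ℝ := x ⬝ᵥ P.mulVec y

/-- `√(det (iB))` (note `det(iB) = i² det B` for 2×2 `B`) -/
def sdet (B : M2) : ℂ := ((Complex.I ^ 2 * (B.det : ℂ))) ^ ((1 : ℂ)/2)

/-- the chirp `λ_M(t) = e^{iπ tᵀB⁻¹At}` -/
def lam (A B : M2) (t : V2) : ℂ := ePi (Q (B⁻¹ * A) t t)

/-- the continuous 2D non-separable LCT -/
def LCT (A B D : M2) (f : V2 → ℂ) (ξ : V2) : ℂ :=
  (sdet B)⁻¹ * ∫ u : V2, f u * ePi (Q (B⁻¹ * A) u u - 2 * Q B⁻¹ u ξ + Q (D * B⁻¹) ξ ξ)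

/-- the 2D discrete-time non-separable LCT -/
def DLCT (A B D : M2) (s : Z2 → ℂ) (ξ : V2) : ℂ :=
  (sdet B)⁻¹ * ∑' k : Z2,
    s k * ePi (Q (B⁻¹ * A) (zc k) (zc k) - 2 * Q B⁻¹ (zc k) ξ + Q (D * B⁻¹) ξ ξ)

/-- the canonical (continuous) convolution `⋆_c` -/
def cconv (A B : M2) (f g : V2 → ℂ) (t : V2) : ℂ :=
  ePi (-(Q (B⁻¹ * A) t t)) * (sdet B)⁻¹ *
    ∫ x : V2, lam A B (t - x) * f (t - x) * (lam A B x * g x)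

/-- the canonical semi-discrete convolution `⋆_{sd}` -/
def sdconv (A B : M2) (s : Z2 → ℂ) (g : V2 → ℂ) (t : V2) : ℂ :=
  ePi (-(Q (B⁻¹ * A) t t)) * (sdet B)⁻¹ *
    ∑' k : Z2, lam A B (zc k) * s k * (lam A B (t - zc k) * g (t - zc k))

/-- the canonical discrete convolution `⋆_d` -/
def dconv (A B : M2) (s c : Z2 → ℂ) (l : Z2) : ℂ :=
  ePi (-(Q (B⁻¹ * A) (zc l) (zc l))) * (sdet B)⁻¹ *
    ∑' k : Z2, lam A B (zc k) * s k * (lam A B (zc (l - k)) * c (l - k))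

/-- symplecticity of the block matrix `[A,B;C,D]` -/
def Symp (A B C D : M2) : Prop :=
  A * Bᵀ = B * Aᵀ ∧ C * Dᵀ = D * Cᵀ ∧ A * Dᵀ - B * Cᵀ = 1

/-- the unit half-open square `[0,1)²` -/
def box : Set V2 := Set.univ.pi fun _ => Set.Ico (0:ℝ) 1

/-- real cast of an integer matrix -/
def Mr (M : Matrix (Fin 2) (Fin 2) ℤ) : M2 := M.map (Int.cast : ℤ → ℝ)

/-- the set `N(M)` of integer points in the fundamental parallelepiped -/
def NM (M : Matrix (Fin 2) (Fin 2) ℤ) : Set Z2 :=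
  {k : Z2 | ∃ x : V2, x ∈ box ∧ zc k = (Mr M).mulVec x}

/-- the discrete time Fourier transform -/
def DTFT (d : Z2 → ℂ) (ξ : V2) : ℂ := ∑' k : Z2, d k * ePi (-(2 * (zc k ⬝ᵥ ξ)))


section Convolution

variable {G R : Type*} [AddCommGroup G] [NormedRing R] [CompleteSpace R]

theorem tsum_tsum_mul_sub_eq_tsum_mul_tsum {f g : G → R} (hf : Summable (‖f ·‖))
    (hg : Summable (‖g ·‖)) :
    ∑' l, ∑' k, f k * g (l - k) = (∑' k, f k) * ∑' k, g k := by
  let e : G × G ≃ G × G :=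
    { toFun := fun p => (p.1 + p.2, p.1)
      invFun := fun p => (p.2, p.1 - p.2)
      left_inv := fun p => by simp
      right_inv := fun p => by simp }
  have hconv : (fun p : G × G => f p.2 * g (p.1 - p.2)) ∘ e = fun p => f p.1 * g p.2 := by
    funext p; simp [e]
  have hsum : Summable fun p : G × G => f p.2 * g (p.1 - p.2) := by
    rw [← e.summable_iff, hconv]; exact summable_mul_of_summable_norm hf hg
  calc ∑' l, ∑' k, f k * g (l - k) = ∑' p : G × G, f p.2 * g (p.1 - p.2) := hsum.tsum_prod.symm
    _ = ∑' p : G × G, f p.1 * g p.2 := by rw [← hconv]; exact (e.tsum_eq _).symm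
    _ = (∑' k, f k) * ∑' k, g k := (tsum_mul_tsum_of_summable_norm hf hg).symm

end Convolution

lemma ePi_add (a b : ℝ) : ePi (a + b) = ePi a * ePi b := by
  simp only [ePi, ← Complex.exp_add]; push_cast; ring_nf

lemma ePi_neg_mul_ePi (r : ℝ) : ePi (-r) * ePi r = 1 := by
  rw [← ePi_add, neg_add_cancel]; simp [ePi]

lemma norm_ePi (r : ℝ) : ‖ePi r‖ = 1 := by
  rw [ePi, Complex.norm_exp]; simp

lemma ePi_neg_two_Q_add (P : M2) (ξ : V2) (k m : Z2) :
    ePi (-(2 * Q P (zc (k + m)) ξ)) = ePi (-(2 * Q P (zc k) ξ)) * ePi (-(2 * Q P (zc m) ξ)) := by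
  have hzc : zc (k + m) = zc k + zc m := by funext i; simp [zc]
  rw [← ePi_add, hzc]
  congr 1
  simp only [Q, add_dotProduct]; ring

def chirpTwist (A B : M2) (ξ : V2) (s : Z2 → ℂ) (k : Z2) : ℂ :=
  lam A B (zc k) * s k * ePi (-(2 * Q B⁻¹ (zc k) ξ))

lemma norm_chirpTwist (A B : M2) (ξ : V2) (s : Z2 → ℂ) (k : Z2) :
    ‖chirpTwist A B ξ s k‖ = ‖s k‖ := by
  simp [chirpTwist, lam, norm_ePi]

lemma DLCT_eq_tsum_chirpTwist (A B D : M2) (s : Z2 → ℂ) (ξ : V2) :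
    DLCT A B D s ξ = (sdet B)⁻¹ * ePi (Q (D * B⁻¹) ξ ξ) * ∑' k, chirpTwist A B ξ s k := by
  rw [DLCT, mul_assoc, ← tsum_mul_left (a := ePi (Q (D * B⁻¹) ξ ξ))]
  congr 1
  refine tsum_congr fun k => ?_
  rw [chirpTwist, lam, sub_eq_add_neg, ePi_add, ePi_add]
  ring

lemma chirpTwist_dconv (A B : M2) (ξ : V2) (s c : Z2 → ℂ) (l : Z2) :
    chirpTwist A B ξ (dconv A B s c) l =
      (sdet B)⁻¹ * ∑' k, chirpTwist A B ξ s k * chirpTwist A B ξ c (l - k) := by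
  have hchirp : lam A B (zc l) * ePi (-(Q (B⁻¹ * A) (zc l) (zc l))) = 1 := by
    rw [lam, mul_comm, ePi_neg_mul_ePi]
  simp only [chirpTwist, dconv, ← tsum_mul_left, ← tsum_mul_right]
  refine tsum_congr fun k => ?_
  have hsplit := ePi_neg_two_Q_add B⁻¹ ξ k (l - k)
  rw [add_sub_cancel] at hsplit
  rw [hsplit]
  linear_combination (sdet B)⁻¹ * lam A B (zc k) * s k * ePi (-(2 * Q B⁻¹ (zc k) ξ)) *
    (lam A B (zc (l - k)) * c (l - k)) * ePi (-(2 * Q B⁻¹ (zc (l - k)) ξ)) * hchirp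

theorem dlct_dconv_general (A B D : M2)
    (s c : Z2 → ℂ)
    (hs : Summable fun k => ‖s k‖) (hc : Summable fun k => ‖c k‖) :
    ∀ ξ : V2, DLCT A B D (dconv A B s c) ξ =
      ePi (-(Q (D * B⁻¹) ξ ξ)) * DLCT A B D s ξ * DLCT A B D c ξ := by
  intro ξ
  have hs' : Summable (‖chirpTwist A B ξ s ·‖) := by simpa only [norm_chirpTwist] using hs
  have hc' : Summable (‖chirpTwist A B ξ c ·‖) := by simpa only [norm_chirpTwist] using hc
  simp only [DLCT_eq_tsum_chirpTwist, chirpTwist_dconv, tsum_mul_left,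
    tsum_tsum_mul_sub_eq_tsum_mul_tsum hs' hc']
  linear_combination -(sdet B)⁻¹ * (sdet B)⁻¹ * ePi (Q (D * B⁻¹) ξ ξ) *
    (∑' k, chirpTwist A B ξ s k) * (∑' k, chirpTwist A B ξ c k) * ePi_neg_mul_ePi (Q (D * B⁻¹) ξ ξ)

/-- Discrete canonical convolution theorem:
`L_M (s ⋆_d c)(ξ) = e^{-iπ ξᵀDB⁻¹ξ} (L_M s)(ξ) (L_M c)(ξ)`. -/
theorem dlct_dconv (A B C D : M2) (hSymp : Symp A B C D) (hB : B.det ≠ 0)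
    (s c : Z2 → ℂ)
    (hs : Summable fun k => ‖s k‖) (hc : Summable fun k => ‖c k‖) :
    ∀ ξ : V2, DLCT A B D (dconv A B s c) ξ =
      ePi (-(Q (D * B⁻¹) ξ ξ)) * DLCT A B D s ξ * DLCT A B D c ξ :=
  dlct_dconv_general A B D s c hs hc
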